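/- arXiv:1812.07107 — 7 statements merged into one kernel-verified Lean document; each statement's English description precedes it below -/
import Mathlib

section
/- For every n ≥ 1 and every 2^n × 2^n complex matrix σ with trace 1, one has (1/4^n) · Σ_{a,b ∈ {0,1}^n} (X^a Z^b) σ (X^a Z^b)† = (1/2^n) · I, where I is the 2^n × 2^n identity matrix. (Quantum one-time pad twirl, Eq. (1).) -/
open Matrix BigOperators

/-- Pauli X gate. -/
noncomputable def Xg : Matrix (Fin 2) (Fin 2) ℂ := !![0, 1; 1, 0]

/-- Pauli Z gate. -/
noncomputable def Zg : Matrix (Fin 2) (Fin 2) ℂ := !![1, 0; 0, -1]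

/-- The n-fold Kronecker product `⊗ₖ X^{a_k} Z^{b_k}`, as a matrix indexed by
functions `Fin n → Fin 2`. -/
noncomputable def XaZb (n : ℕ) (a b : Fin n → Fin 2) :
    Matrix (Fin n → Fin 2) (Fin n → Fin 2) ℂ :=
  Matrix.of fun i j => ∏ k : Fin n, (Xg ^ (a k : ℕ) * Zg ^ (b k : ℕ)) (i k) (j k)

/-!
`X^a Z^b` is a signed permutation matrix: its `(i, j)` entry is nonzero only for `j = i + a`
(addition in `(ℤ/2)^n`), where it is the sign `χ_b(j) = (-1)^{b·j}`. Conjugating `σ` therefore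
gives the entry `χ_b(i + a) χ_b(j + a) σ(i + a, j + a)`. Summing over `b`, orthogonality of the
characters `χ_b` kills every off-diagonal entry and multiplies the diagonal ones by `2^n`;
summing over `a` then runs `i + a` over all basis vectors, producing `2^n · tr σ · I`.
-/

/-- `χ_b(x) = (-1)^{b·x}`, the eigenvalue of `Z^b` on the basis vector `x`. -/
def zSign {n : ℕ} (b x : Fin n → Fin 2) : ℂ := ∏ k, (-1) ^ ((b k : ℕ) * (x k : ℕ))

lemma star_zSign {n : ℕ} (b x : Fin n → Fin 2) : star (zSign b x) = zSign b x := by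
  simp [zSign, star_prod]

lemma sum_neg_one_pow_mul_neg_one_pow (x y : Fin 2) :
    ∑ c : Fin 2, (-1 : ℂ) ^ ((c : ℕ) * (x : ℕ)) * (-1) ^ ((c : ℕ) * (y : ℕ)) =
      if x = y then 2 else 0 := by
  fin_cases x <;> fin_cases y <;> norm_num

lemma sum_zSign_mul_zSign {n : ℕ} (x y : Fin n → Fin 2) :
    ∑ b, zSign b x * zSign b y = if x = y then 2 ^ n else 0 := by
  simp only [zSign, ← Finset.prod_mul_distrib]
  rw [← Fintype.prod_sum fun k (c : Fin 2) =>
    (-1 : ℂ) ^ ((c : ℕ) * (x k : ℕ)) * (-1) ^ ((c : ℕ) * (y k : ℕ))]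
  simp only [sum_neg_one_pow_mul_neg_one_pow, Fintype.prod_ite_zero, ← funext_iff]
  simp

lemma pauli_apply (a b i j : Fin 2) :
    (Xg ^ (a : ℕ) * Zg ^ (b : ℕ)) i j =
      if j = i + a then (-1) ^ ((b : ℕ) * (j : ℕ)) else 0 := by
  fin_cases a <;> fin_cases b <;> fin_cases i <;> fin_cases j <;>
    simp [Xg, Zg, Matrix.mul_apply, Fin.sum_univ_two]

lemma XaZb_apply (n : ℕ) (a b i j : Fin n → Fin 2) :
    XaZb n a b i j = if j = i + a then zSign b j else 0 := by
  simp [XaZb, zSign, pauli_apply, Fintype.prod_ite_zero, funext_iff]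

lemma XaZb_mul_mul_conjTranspose_apply (n : ℕ) (a b : Fin n → Fin 2)
    (σ : Matrix (Fin n → Fin 2) (Fin n → Fin 2) ℂ) (i j : Fin n → Fin 2) :
    (XaZb n a b * σ * (XaZb n a b)ᴴ) i j =
      zSign b (i + a) * zSign b (j + a) * σ (i + a) (j + a) := by
  have row : ∀ q, (XaZb n a b * σ) i q = zSign b (i + a) * σ (i + a) q := fun q => by
    simp [mul_apply, XaZb_apply, ite_mul]
  rw [mul_apply]
  simp only [row, conjTranspose_apply, XaZb_apply, apply_ite star, star_zSign,
    star_zero, mul_ite, mul_zero, Finset.sum_ite_eq', Finset.mem_univ, if_true]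
  ring

lemma sum_XaZb_mul_mul_conjTranspose (n : ℕ)
    (σ : Matrix (Fin n → Fin 2) (Fin n → Fin 2) ℂ) :
    ∑ a, ∑ b, XaZb n a b * σ * (XaZb n a b)ᴴ = (2 ^ n * σ.trace) • 1 := by
  ext i j
  simp only [Matrix.sum_apply, XaZb_mul_mul_conjTranspose_apply, ← Finset.sum_mul,
    sum_zSign_mul_zSign, add_left_inj, Matrix.smul_apply, one_apply, smul_eq_mul]
  by_cases hij : i = j
  · subst hij
    have reindex : ∑ a, σ (i + a) (i + a) = σ.trace :=
      Equiv.sum_comp (Equiv.addLeft i) fun p => σ p p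
    simp [← Finset.mul_sum, reindex]
  · simp [hij]

theorem qotp_twirl_general (n : ℕ)
    (σ : Matrix (Fin n → Fin 2) (Fin n → Fin 2) ℂ) (hσ : σ.trace = 1) :
    (1 / (4 : ℂ) ^ n) • ∑ a : Fin n → Fin 2, ∑ b : Fin n → Fin 2,
        XaZb n a b * σ * (XaZb n a b)ᴴ
      = (1 / (2 : ℂ) ^ n) • (1 : Matrix (Fin n → Fin 2) (Fin n → Fin 2) ℂ) := by
  rw [sum_XaZb_mul_mul_conjTranspose, hσ, smul_smul]
  congr 1
  rw [show (4 : ℂ) ^ n = 2 ^ n * 2 ^ n by rw [← mul_pow]; norm_num]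
  field_simp

/-- Quantum one-time pad twirl (Eq. (1)): averaging a trace-one matrix over all
Pauli conjugations yields the maximally mixed state. -/
theorem qotp_twirl (n : ℕ) (hn : 1 ≤ n)
    (σ : Matrix (Fin n → Fin 2) (Fin n → Fin 2) ℂ) (hσ : σ.trace = 1) :
    (1 / (4 : ℂ) ^ n) • ∑ a : Fin n → Fin 2, ∑ b : Fin n → Fin 2,
        XaZb n a b * σ * (XaZb n a b)ᴴ
      = (1 / (2 : ℂ) ^ n) • (1 : Matrix (Fin n → Fin 2) (Fin n → Fin 2) ℂ) :=
  qotp_twirl_general n σ hσ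
end

section
/- For every 2×2 unitary matrix U and every vector α ∈ ℂ², the identity α ⊗ |Φ00⟩ = (1/2) · Σ_{a,b ∈ {0,1}} |Φ(U)_{ab}⟩ ⊗ (X^a Z^b U α) holds in ℂ² ⊗ ℂ² ⊗ ℂ². (Gate teleportation identity, Eq. (3).) -/
open Matrix BigOperators

/-- Standard basis vector `|i⟩` of ℂ². -/
noncomputable def ket (i : Fin 2) : Fin 2 → ℂ := fun j => if j = i then 1 else 0

/-- Tensor product of two vectors of ℂ². -/
noncomputable def tens (u v : Fin 2 → ℂ) : Fin 2 × Fin 2 → ℂ := fun p => u p.1 * v p.2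

/-- The EPR state `|Φ00⟩ = (1/√2)(|0⟩⊗|0⟩ + |1⟩⊗|1⟩)`. -/
noncomputable def Phi00 : Fin 2 × Fin 2 → ℂ :=
  ((Real.sqrt 2 : ℂ))⁻¹ • (tens (ket 0) (ket 0) + tens (ket 1) (ket 1))

/-- The Bell state `|Φ_{ab}⟩ = (Z^b X^a ⊗ I)|Φ00⟩`. -/
noncomputable def PhiBell (a b : Fin 2) : Fin 2 × Fin 2 → ℂ :=
  (kroneckerMap (· * ·) (Zg ^ (b : ℕ) * Xg ^ (a : ℕ))
    (1 : Matrix (Fin 2) (Fin 2) ℂ)).mulVec Phi00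

/-- The `U`-rotated Bell state `|Φ(U)_{ab}⟩ = (U† ⊗ I)|Φ_{ab}⟩`. -/
noncomputable def PhiU (U : Matrix (Fin 2) (Fin 2) ℂ) (a b : Fin 2) : Fin 2 × Fin 2 → ℂ :=
  (kroneckerMap (· * ·) Uᴴ (1 : Matrix (Fin 2) (Fin 2) ℂ)).mulVec (PhiBell a b)

lemma PhiBell_apply (a b : Fin 2) (i j : Fin 2) :
    PhiBell a b (i, j)
      = ((Real.sqrt 2 : ℂ))⁻¹ * (Zg ^ (b : ℕ) * Xg ^ (a : ℕ)) i j := by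
  simp only [PhiBell, Phi00, Matrix.mulVec, dotProduct, Fintype.sum_prod_type,
    Fin.sum_univ_two, kroneckerMap_apply, tens, ket, Pi.smul_apply, Pi.add_apply,
    smul_eq_mul, Matrix.one_apply]
  fin_cases i <;> fin_cases j <;> simp <;> ring

lemma PhiU_apply (U : Matrix (Fin 2) (Fin 2) ℂ) (a b : Fin 2) (i j : Fin 2) :
    PhiU U a b (i, j)
      = ((Real.sqrt 2 : ℂ))⁻¹ * (Uᴴ * (Zg ^ (b : ℕ) * Xg ^ (a : ℕ))) i j := by
  simp only [PhiU, Matrix.mulVec, dotProduct, Fintype.sum_prod_type,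
    Fin.sum_univ_two, kroneckerMap_apply, Matrix.one_apply, Matrix.mul_apply]
  have h0 := PhiBell_apply a b 0 j
  have h1 := PhiBell_apply a b 1 j
  fin_cases i <;> fin_cases j <;>
    simp_all [Matrix.mul_apply, Fin.sum_univ_two] <;> ring

/-- Gate teleportation identity (Eq. (3)):
`α ⊗ |Φ00⟩ = (1/2) Σ_{a,b} |Φ(U)_{ab}⟩ ⊗ (X^a Z^b U α)` in ℂ²⊗ℂ²⊗ℂ²,
for every 2×2 unitary `U`. -/
theorem gate_teleportation_identity (U : Matrix (Fin 2) (Fin 2) ℂ)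
    (hU : U ∈ Matrix.unitaryGroup (Fin 2) ℂ) (α : Fin 2 → ℂ) :
    (fun p : Fin 2 × Fin 2 × Fin 2 => α p.1 * Phi00 p.2)
      = (1 / 2 : ℂ) • ∑ a : Fin 2, ∑ b : Fin 2,
          (fun p : Fin 2 × Fin 2 × Fin 2 =>
            PhiU U a b (p.1, p.2.1)
              * ((Xg ^ (a : ℕ) * Zg ^ (b : ℕ) * U).mulVec α) p.2.2) := by
  have h : star U * U = 1 := hU.1
  have hs : ∀ i j : Fin 2,
      (starRingEnd ℂ) (U 0 i) * U 0 j + (starRingEnd ℂ) (U 1 i) * U 1 j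
        = if i = j then 1 else 0 := by
    intro i j
    have := congrFun (congrFun h i) j
    simpa [Matrix.mul_apply, Fin.sum_univ_two, Matrix.star_apply,
      Matrix.one_apply] using this
  have h00 := hs 0 0
  have h01 := hs 0 1
  have h10 := hs 1 0
  have h11 := hs 1 1
  norm_num at h00 h01 h10 h11
  funext p
  obtain ⟨i, j, k⟩ := p
  simp only [Pi.smul_apply, Finset.sum_apply, Fin.sum_univ_two, smul_eq_mul,
    PhiU_apply, Matrix.mulVec, dotProduct, Matrix.mul_apply,
    Matrix.conjTranspose_apply, Phi00, tens, ket, Pi.add_apply, Pi.smul_apply,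
    smul_eq_mul, Xg, Zg, pow_zero, pow_one, Matrix.one_apply]
  have two : ∀ m : Fin 2, m = 0 ∨ m = 1 := by decide
  rcases two i with rfl | rfl <;> rcases two j with rfl | rfl <;> rcases two k with rfl | rfl <;>
    simp [Fin.sum_univ_two, Matrix.mul_apply] <;>
    try ring
  all_goals
    first
      | linear_combination (-(α 0 * ((Real.sqrt 2 : ℂ))⁻¹) * h00 - (((Real.sqrt 2 : ℂ))⁻¹ * α 1) * h01)
      | linear_combination (-(α 1 * ((Real.sqrt 2 : ℂ))⁻¹) * h11 - (((Real.sqrt 2 : ℂ))⁻¹ * α 0) * h10)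
end

section
/- For every 2×2 unitary matrix U, every α ∈ ℂ², and every a,b ∈ {0,1}, contracting the first two tensor factors of α ⊗ |Φ00⟩ ∈ ℂ²⊗ℂ²⊗ℂ² against |Φ(U)_{ab}⟩ yields (1/2) · X^a Z^b U α; that is, the linear map ℂ²⊗ℂ²⊗ℂ² → ℂ² defined on simple tensors by u⊗v⊗w ↦ ⟨Φ(U)_{ab}, u⊗v⟩ · w sends α ⊗ |Φ00⟩ to (1/2) · X^a Z^b U α. (Post-measurement state of the U-rotated Bell measurement.) -/
open Matrix BigOperators

/-- The linear map ℂ²⊗ℂ²⊗ℂ² → ℂ² contracting the first two tensor factors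
against a vector `φ ∈ ℂ²⊗ℂ²`; on simple tensors, `u⊗v⊗w ↦ ⟨φ, u⊗v⟩ · w`
(inner product conjugate-linear in the first argument). -/
noncomputable def contractFirstTwo (φ : Fin 2 × Fin 2 → ℂ)
    (ψ : Fin 2 × Fin 2 × Fin 2 → ℂ) : Fin 2 → ℂ :=
  fun k => ∑ p : Fin 2 × Fin 2, (starRingEnd ℂ) (φ p) * ψ (p.1, p.2, k)

lemma conj_sqrt_two_inv_mul : ((Real.sqrt 2 : ℂ))⁻¹ * ((Real.sqrt 2 : ℂ))⁻¹ = 1/2 := by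
  rw [← mul_inv]
  norm_num [← Complex.ofReal_mul, ← Real.sqrt_mul_self (by norm_num : (0:ℝ) ≤ 2)]

set_option maxHeartbeats 2000000 in

/-- Post-measurement state of the `U`-rotated Bell measurement: contracting
`α ⊗ |Φ00⟩` against `|Φ(U)_{ab}⟩` yields `(1/2) · X^a Z^b U α`. -/
theorem rotated_bell_post_measurement (U : Matrix (Fin 2) (Fin 2) ℂ)
    (hU : U ∈ Matrix.unitaryGroup (Fin 2) ℂ) (α : Fin 2 → ℂ) (a b : Fin 2) :
    contractFirstTwo (PhiU U a b)
        (fun p : Fin 2 × Fin 2 × Fin 2 => α p.1 * Phi00 p.2)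
      = (1 / 2 : ℂ) • (Xg ^ (a : ℕ) * Zg ^ (b : ℕ) * U).mulVec α := by
  funext k
  fin_cases a <;> fin_cases b <;> fin_cases k <;>
  · simp only [contractFirstTwo, PhiU, PhiBell, Phi00, tens, ket, Xg, Zg, Matrix.mulVec,
      dotProduct, kroneckerMap_apply, Fintype.sum_prod_type, Fin.sum_univ_two,
      Fin.isValue, pow_zero, pow_one, Matrix.mul_apply, Matrix.one_apply, Matrix.of_apply,
      Matrix.cons_val', Matrix.cons_val_zero, Matrix.cons_val_one, Matrix.head_cons,
      Matrix.head_fin_const, Matrix.empty_val', Matrix.cons_val_fin_one,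
      Pi.add_apply, Pi.smul_apply, smul_eq_mul, _root_.map_mul, map_add,
      map_inv₀, Complex.conj_ofReal, Matrix.one_mul, Matrix.mul_one, Pi.smul_apply]
    simp only [Fin.isValue, if_true, if_false, reduceCtorEq, Fin.zero_eta, Fin.mk_one,
      one_ne_zero, zero_ne_one, ite_true, ite_false, _root_.map_one, _root_.map_zero,
      map_neg, conjTranspose_apply, Complex.conj_conj, mul_one, mul_zero, one_mul, zero_mul,
      add_zero, zero_add, neg_zero, Matrix.one_apply_eq, ne_eq, starRingEnd_apply, star_star,
      Matrix.cons_val_zero, Matrix.cons_val_one, Matrix.head_cons, Matrix.vecHead]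
    ring_nf
    rw [show ((Real.sqrt 2 : ℂ))⁻¹^2 = ((Real.sqrt 2 : ℂ))⁻¹*((Real.sqrt 2 : ℂ))⁻¹ from sq _,
      conj_sqrt_two_inv_mul]
    ring
end

section
/- For every 2×2 unitary matrix U, every unit vector α ∈ ℂ² (‖α‖ = 1), and every a,b ∈ {0,1}, the squared norm of the contraction of α ⊗ |Φ00⟩ against |Φ(U)_{ab}⟩ equals 1/4; that is, ‖ L_{ab}(α ⊗ |Φ00⟩) ‖² = 1/4, where L_{ab} : ℂ²⊗ℂ²⊗ℂ² → ℂ² is the linear map defined on simple tensors by u⊗v⊗w ↦ ⟨Φ(U)_{ab}, u⊗v⟩ · w. (The four outcomes of a U-rotated Bell measurement are uniformly random, the core of Proposition 1.) -/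
open Matrix BigOperators

/-! The coefficients of `|Φ00⟩` are `δ_{jk}/√2`, so contracting `α ⊗ |Φ00⟩` against
`(M ⊗ I)|Φ00⟩` gives `½ M†α` (the teleportation identity). For `|Φ(U)_{ab}⟩` the matrix is
`M = U† Z^b X^a`, which is unitary, so the squared norm is `¼ ‖α‖² = ¼`. -/

lemma star_dotProduct_self_eq_sum_norm_sq {𝕜 ι : Type*} [RCLike 𝕜] [Fintype ι]
    (v : ι → 𝕜) :
    star v ⬝ᵥ v = ((∑ i, ‖v i‖ ^ 2 : ℝ) : 𝕜) := by
  simp [dotProduct, RCLike.conj_mul]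

lemma sum_norm_sq_mulVec_of_mem_unitaryGroup {𝕜 ι : Type*} [RCLike 𝕜] [Fintype ι]
    [DecidableEq ι] {W : Matrix ι ι 𝕜} (hW : W ∈ unitaryGroup ι 𝕜) (v : ι → 𝕜) :
    ∑ i, ‖(W *ᵥ v) i‖ ^ 2 = ∑ i, ‖v i‖ ^ 2 := by
  have h : star (W *ᵥ v) ⬝ᵥ (W *ᵥ v) = star v ⬝ᵥ v := by
    rw [star_mulVec, ← dotProduct_mulVec, mulVec_mulVec, ← star_eq_conjTranspose,
      mem_unitaryGroup_iff'.mp hW, one_mulVec]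
  rw [star_dotProduct_self_eq_sum_norm_sq, star_dotProduct_self_eq_sum_norm_sq] at h
  exact_mod_cast h

lemma kroneckerMap_one_mulVec_apply {R ι ι' κ : Type*} [Semiring R] [Fintype ι'] [Fintype κ]
    [DecidableEq κ] (M : Matrix ι ι' R) (v : ι' × κ → R) (i : ι) (k : κ) :
    (kroneckerMap (· * ·) M (1 : Matrix κ κ R) *ᵥ v) (i, k) = ∑ j, M i j * v (j, k) := by
  simp [mulVec, dotProduct, Fintype.sum_prod_type, one_apply, mul_ite]

lemma Xg_mem_unitaryGroup : Xg ∈ unitaryGroup (Fin 2) ℂ := by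
  rw [mem_unitaryGroup_iff, star_eq_conjTranspose]
  ext i j
  fin_cases i <;> fin_cases j <;> simp [Xg, mul_apply, Fin.sum_univ_two]

lemma Zg_mem_unitaryGroup : Zg ∈ unitaryGroup (Fin 2) ℂ := by
  rw [mem_unitaryGroup_iff, star_eq_conjTranspose]
  ext i j
  fin_cases i <;> fin_cases j <;> simp [Zg, mul_apply, Fin.sum_univ_two]

lemma Phi00_apply (j k : Fin 2) :
    Phi00 (j, k) = if j = k then ((Real.sqrt 2 : ℂ))⁻¹ else 0 := by
  fin_cases j <;> fin_cases k <;> simp [Phi00, tens, ket]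

lemma kroneckerMap_one_mulVec_Phi00_apply (M : Matrix (Fin 2) (Fin 2) ℂ) (i k : Fin 2) :
    (kroneckerMap (· * ·) M (1 : Matrix (Fin 2) (Fin 2) ℂ) *ᵥ Phi00) (i, k)
      = ((Real.sqrt 2 : ℂ))⁻¹ * M i k := by
  simp [kroneckerMap_one_mulVec_apply, Phi00_apply, mul_comm]

lemma PhiU_eq_kroneckerMap_one_mulVec_Phi00 (U : Matrix (Fin 2) (Fin 2) ℂ) (a b : Fin 2) :
    PhiU U a b = kroneckerMap (· * ·) (Uᴴ * (Zg ^ (b : ℕ) * Xg ^ (a : ℕ)))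
      (1 : Matrix (Fin 2) (Fin 2) ℂ) *ᵥ Phi00 := by
  rw [PhiU, PhiBell, mulVec_mulVec, ← mul_kronecker_mul, mul_one]

lemma contractFirstTwo_tens_Phi00 (φ : Fin 2 × Fin 2 → ℂ) (α : Fin 2 → ℂ) (k : Fin 2) :
    contractFirstTwo φ (fun p : Fin 2 × Fin 2 × Fin 2 => α p.1 * Phi00 p.2) k
      = ((Real.sqrt 2 : ℂ))⁻¹ * ∑ i, (starRingEnd ℂ) (φ (i, k)) * α i := by
  simp only [contractFirstTwo, Fintype.sum_prod_type, Phi00_apply, mul_ite, mul_zero,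
    Finset.sum_ite_eq', Finset.mem_univ, if_true, Finset.mul_sum]
  exact Finset.sum_congr rfl fun i _ => by ring

lemma inv_sqrt_two_mul_inv_sqrt_two :
    ((Real.sqrt 2 : ℂ))⁻¹ * ((Real.sqrt 2 : ℂ))⁻¹ = 1 / 2 := by
  rw [← mul_inv, ← Complex.ofReal_mul, Real.mul_self_sqrt zero_le_two]
  norm_num

lemma contractFirstTwo_kroneckerMap_one_mulVec_Phi00 (M : Matrix (Fin 2) (Fin 2) ℂ)
    (α : Fin 2 → ℂ) :
    contractFirstTwo (kroneckerMap (· * ·) M (1 : Matrix (Fin 2) (Fin 2) ℂ) *ᵥ Phi00)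
        (fun p : Fin 2 × Fin 2 × Fin 2 => α p.1 * Phi00 p.2)
      = (1 / 2 : ℂ) • (Mᴴ *ᵥ α) := by
  ext k
  simp only [contractFirstTwo_tens_Phi00, kroneckerMap_one_mulVec_Phi00_apply]
  simp only [map_mul, map_inv₀, Complex.conj_ofReal, Pi.smul_apply, smul_eq_mul, mulVec,
    dotProduct, conjTranspose_apply, RCLike.star_def, ← inv_sqrt_two_mul_inv_sqrt_two,
    Finset.mul_sum]
  exact Finset.sum_congr rfl fun i _ => by ring

/-- Each of the four outcomes of a `U`-rotated Bell measurement on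
`α ⊗ |Φ00⟩` (with `‖α‖ = 1`) occurs with probability 1/4: the squared norm of
the contraction against `|Φ(U)_{ab}⟩` equals 1/4. -/
theorem rotated_bell_uniform_outcomes (U : Matrix (Fin 2) (Fin 2) ℂ)
    (hU : U ∈ Matrix.unitaryGroup (Fin 2) ℂ) (α : Fin 2 → ℂ)
    (hα : ∑ i : Fin 2, ‖α i‖ ^ 2 = 1) (a b : Fin 2) :
    ∑ k : Fin 2,
        ‖contractFirstTwo (PhiU U a b)
            (fun p : Fin 2 × Fin 2 × Fin 2 => α p.1 * Phi00 p.2) k‖ ^ 2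
      = 1 / 4 := by
  have hM : (Uᴴ * (Zg ^ (b : ℕ) * Xg ^ (a : ℕ)))ᴴ ∈ unitaryGroup (Fin 2) ℂ :=
    Unitary.star_mem (mul_mem (Unitary.star_mem hU)
      (mul_mem (pow_mem Zg_mem_unitaryGroup _) (pow_mem Xg_mem_unitaryGroup _)))
  rw [PhiU_eq_kroneckerMap_one_mulVec_Phi00, contractFirstTwo_kroneckerMap_one_mulVec_Phi00]
  simp only [Pi.smul_apply, norm_smul, mul_pow, ← Finset.mul_sum,
    sum_norm_sq_mulVec_of_mem_unitaryGroup hM, hα]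
  norm_num
end

section
/- For all a,b ∈ {0,1}, the 2×2 matrix identity P^a · T† · X^a Z^b = e^{i·πa/4} · X^a Z^b · T† holds, where T† is the conjugate transpose of T; in particular P^a T† X^a Z^b = X^a Z^b T† up to a global phase. (Key-updating identity for the T†-gate.) -/
open Matrix

/-- Phase gate `P = diag(1, i)`. -/
noncomputable def Pg : Matrix (Fin 2) (Fin 2) ℂ := !![1, 0; 0, Complex.I]

/-- T gate `T = diag(1, e^{iπ/4})`. -/
noncomputable def Tg : Matrix (Fin 2) (Fin 2) ℂ :=
  !![1, 0; 0, Complex.exp (Complex.I * Real.pi / 4)]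


lemma hconj : (starRingEnd ℂ) (Complex.exp (Complex.I * Real.pi / 4))
    = Complex.exp (-(Complex.I * Real.pi / 4)) := by
  rw [← Complex.exp_conj]
  congr 1
  rw [map_div₀, _root_.map_mul, Complex.conj_I, Complex.conj_ofReal, map_ofNat]
  ring

lemma l1 : Complex.exp (Real.pi * Complex.I / 4) * Complex.exp (-(Real.pi * Complex.I / 4)) = 1 := by
  rw [← Complex.exp_add]; simp

lemma l2 : Complex.I * Complex.exp (-(Real.pi * Complex.I / 4))
    = Complex.exp (Real.pi * Complex.I / 4) := by
  have h2 : Complex.exp ((Real.pi : ℂ) / 2 * Complex.I) = Complex.I := by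
    rw [Complex.exp_mul_I, Complex.cos_pi_div_two, Complex.sin_pi_div_two]; ring
  conv_rhs => rw [show (Real.pi : ℂ) * Complex.I / 4
      = (Real.pi : ℂ) / 2 * Complex.I + -((Real.pi : ℂ) * Complex.I / 4) from by ring,
    Complex.exp_add, h2]

lemma hTdag : Tgᴴ = !![1, 0; 0, Complex.exp (-(Complex.I * Real.pi / 4))] := by
  ext i j
  fin_cases i <;> fin_cases j <;>
    simp [Tg, Matrix.conjTranspose_apply, hconj]

/-- Key-updating identity for the T†-gate:
`P^a T† X^a Z^b = e^{iπa/4} X^a Z^b T†` for bits `a, b`,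
where `T†` is the conjugate transpose of `T`. -/
theorem Tdag_key_update (a b : Fin 2) :
    Pg ^ (a : ℕ) * Tgᴴ * (Xg ^ (a : ℕ) * Zg ^ (b : ℕ))
      = Complex.exp (Complex.I * Real.pi * (a : ℕ) / 4) •
          (Xg ^ (a : ℕ) * Zg ^ (b : ℕ) * Tgᴴ) := by
  rw [hTdag]
  fin_cases a <;> fin_cases b <;>
    · ext i j
      fin_cases i <;> fin_cases j <;>
        simp [Xg, Zg, Pg, Matrix.mul_apply, Fin.sum_univ_two, l1, l2, pow_succ,
          mul_comm Complex.I ((Real.pi:ℂ))]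
end

section
/- For all x,z,a,b ∈ {0,1} there exists a complex number c with |c| = 1 such that Z^{x⊕z⊕b} X^{x⊕a} · X^a Z^b · P^x · T · X^x Z^z = c · T as 2×2 matrices. (Correctness of decryption after homomorphic evaluation of the T-gate with updated key x' = x⊕a, z' = x⊕z⊕b; the core of Proposition 2.) -/
open Matrix

/-! With `ω = e^{iπ/4}` one has `P T X = ω³ X Z T`: the correction `P^x` turns the `X^x` of the key
into Paulis on the left of `T`, at the cost of the phase `ω^{3x}`. The remaining Paulis cancel:
`X^{x⊕a} X^a = X^x`, `X^x Z^b X^x = (-1)^{xb} Z^b`, `Z` commutes with the diagonal `T`, and the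
`Z`-exponents `(x⊕z⊕b) + b + x + z` add up to an even number. So `c = ω^{3x} (-1)^{xb}`. -/

open Complex Real

lemma exp_I_pi_div_four_sq : exp (I * π / 4) ^ 2 = I := by
  rw [← Complex.exp_nat_mul]
  convert exp_pi_div_two_mul_I using 2
  push_cast
  ring

lemma exp_I_pi_div_four_pow_four : exp (I * π / 4) ^ 4 = -1 := by
  rw [show 4 = 2 * 2 from rfl, pow_mul, exp_I_pi_div_four_sq, I_sq]

lemma norm_exp_I_pi_div_four : ‖exp (I * π / 4)‖ = 1 := by
  rw [mul_div_assoc, ← ofReal_ofNat, ← ofReal_div]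
  exact norm_exp_I_mul_ofReal _

section Involution

variable {M : Type*} [Monoid M] {g : M}

lemma pow_eq_pow_of_mod_two_eq (hg : g ^ 2 = 1) {m n : ℕ} (hmn : m % 2 = n % 2) :
    g ^ m = g ^ n := by
  rw [pow_eq_pow_mod m hg, pow_eq_pow_mod n hg, hmn]

lemma pow_val_add_mul_pow_val (hg : g ^ 2 = 1) (x a : Fin 2) :
    g ^ ((x + a : Fin 2) : ℕ) * g ^ (a : ℕ) = g ^ (x : ℕ) := by
  rw [← pow_add]
  exact pow_eq_pow_of_mod_two_eq hg (by rw [Fin.val_add]; omega)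

end Involution

lemma Xg_sq : Xg ^ 2 = 1 := by
  ext i j; fin_cases i <;> fin_cases j <;> simp [Xg, sq]

lemma Zg_sq : Zg ^ 2 = 1 := by
  ext i j; fin_cases i <;> fin_cases j <;> simp [Zg, sq]

lemma Xg_mul_Zg_mul_Xg : Xg * Zg * Xg = -Zg := by
  ext i j; fin_cases i <;> fin_cases j <;> simp [Xg, Zg]

lemma commute_Zg_Tg : Commute Zg Tg := by
  ext i j; fin_cases i <;> fin_cases j <;> simp [Zg, Tg]

lemma Pg_mul_Tg_mul_Xg : Pg * Tg * Xg = exp (I * π / 4) ^ 3 • (Xg * Zg * Tg) := by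
  ext i j; fin_cases i <;> fin_cases j <;> simp [Xg, Zg, Pg, Tg]
  · linear_combination exp_I_pi_div_four_pow_four
  · linear_combination -exp (I * π / 4) * exp_I_pi_div_four_sq

lemma Xg_pow_mul_Zg_pow_mul_Xg_pow (x b : Fin 2) :
    Xg ^ (x : ℕ) * Zg ^ (b : ℕ) * Xg ^ (x : ℕ) = (-1 : ℂ) ^ ((x : ℕ) * b) • Zg ^ (b : ℕ) := by
  fin_cases x <;> fin_cases b <;> simp [Xg_mul_Zg_mul_Xg, ← sq, Xg_sq]

lemma Pg_pow_mul_Tg_mul_Xg_pow (x : Fin 2) :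
    Pg ^ (x : ℕ) * Tg * Xg ^ (x : ℕ)
      = (exp (I * π / 4) ^ 3) ^ (x : ℕ) • (Xg ^ (x : ℕ) * Zg ^ (x : ℕ) * Tg) := by
  fin_cases x
  · simp
  · simpa using Pg_mul_Tg_mul_Xg

/-- Correctness of decryption after the homomorphic evaluation of the T-gate
with updated key `x' = x⊕a`, `z' = x⊕z⊕b`: for all bits `x, z, a, b`,
`Z^{x⊕z⊕b} X^{x⊕a} · X^a Z^b · P^x · T · X^x Z^z = c · T` for some phase `c`
(`+` in `Fin 2` is XOR). -/
theorem T_homomorphic_decrypt (x z a b : Fin 2) :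
    ∃ c : ℂ, ‖c‖ = 1 ∧
      Zg ^ ((x + z + b : Fin 2) : ℕ) * Xg ^ ((x + a : Fin 2) : ℕ)
          * (Xg ^ (a : ℕ) * Zg ^ (b : ℕ)) * Pg ^ (x : ℕ) * Tg
          * (Xg ^ (x : ℕ) * Zg ^ (z : ℕ))
        = c • Tg := by
  set ω := exp (I * π / 4)
  refine ⟨(ω ^ 3) ^ (x : ℕ) * (-1) ^ ((x : ℕ) * b), by simp [ω, norm_exp_I_pi_div_four], ?_⟩
  calc _ = Zg ^ ((x + z + b : Fin 2) : ℕ) * (Xg ^ ((x + a : Fin 2) : ℕ) * Xg ^ (a : ℕ))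
          * Zg ^ (b : ℕ) * (Pg ^ (x : ℕ) * Tg * Xg ^ (x : ℕ)) * Zg ^ (z : ℕ) := by
        simp only [mul_assoc]
    _ = Zg ^ ((x + z + b : Fin 2) : ℕ) * Xg ^ (x : ℕ) * Zg ^ (b : ℕ)
          * ((ω ^ 3) ^ (x : ℕ) • (Xg ^ (x : ℕ) * Zg ^ (x : ℕ) * Tg)) * Zg ^ (z : ℕ) := by
        rw [pow_val_add_mul_pow_val Xg_sq, Pg_pow_mul_Tg_mul_Xg_pow]
    _ = (ω ^ 3) ^ (x : ℕ) • (Zg ^ ((x + z + b : Fin 2) : ℕ)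
          * (Xg ^ (x : ℕ) * Zg ^ (b : ℕ) * Xg ^ (x : ℕ)) * Zg ^ (x : ℕ) * (Tg * Zg ^ (z : ℕ))) := by
        simp only [mul_smul_comm, smul_mul_assoc, mul_assoc]
    _ = (ω ^ 3) ^ (x : ℕ) • (-1 : ℂ) ^ ((x : ℕ) * b) • (Zg ^ ((x + z + b : Fin 2) : ℕ)
          * Zg ^ (b : ℕ) * Zg ^ (x : ℕ) * Zg ^ (z : ℕ) * Tg) := by
        rw [Xg_pow_mul_Zg_pow_mul_Xg_pow, ← (commute_Zg_Tg.pow_left _).eq]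
        simp only [mul_smul_comm, smul_mul_assoc, mul_assoc]
    _ = _ := by
        rw [← pow_add, ← pow_add, ← pow_add,
          pow_eq_pow_of_mod_two_eq Zg_sq (n := 0) (by simp only [Fin.val_add]; omega),
          pow_zero, one_mul, smul_smul]
end

section
/- For all x,z,a,b ∈ {0,1} there exists a complex number c with |c| = 1 such that Z^{z⊕b} X^{x⊕a} · X^a Z^b · P^x · T† · X^x Z^z = c · T† as 2×2 matrices, where T† is the conjugate transpose of T. (Correctness of decryption after homomorphic evaluation of the T†-gate with updated key x' = x⊕a, z' = z⊕b.) -/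
open Matrix

/-!
Write `ω = e^{iπ/4}`, so `T† = diag(1, ω̄)` and `P = diag(1, ω²)`. The only non-Pauli gate
interacts with the one-time-pad key through two identities: `T†` commutes with `Z`, and
`P T† X = T X = ω X T†`, so the correction `P^x` turns the conjugated gate back into `X^x T†`
up to the phase `ω^x`. What remains is a word in the Paulis in which the key and its update
cancel pairwise, except for one anticommutation of `Z^b` past `X^x`, contributing `(-1)^{xb}`.
-/

local notation "ω" => Complex.exp (Complex.I * Real.pi / 4)

section Involution

variable {M : Type*} [Monoid M] {g : M}

lemma pow_mul_pow_self_of_mul_self_eq_one (hg : g * g = 1) (n : ℕ) : g ^ n * g ^ n = 1 := by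
  rw [← pow_add, ← two_mul, pow_mul, sq, hg, one_pow]

lemma pow_val_add_of_mul_self_eq_one (hg : g * g = 1) (m n : Fin 2) :
    g ^ ((m + n : Fin 2) : ℕ) = g ^ (m : ℕ) * g ^ (n : ℕ) := by
  fin_cases m <;> fin_cases n <;> simp [hg]

end Involution

section Anticommute

variable {R : Type*} [Ring R] {a b : R}

lemma mul_pow_of_mul_eq_neg (h : b * a = -(a * b)) (m : ℕ) :
    b * a ^ m = (-1) ^ m * (a ^ m * b) := by
  induction m with
  | zero => simp
  | succ m ih =>
    rw [pow_succ, ← mul_assoc, ih, mul_assoc, mul_assoc, h]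
    simp [pow_succ, mul_assoc]

lemma pow_mul_pow_of_mul_eq_neg (h : b * a = -(a * b)) (m n : ℕ) :
    b ^ n * a ^ m = (-1) ^ (m * n) * (a ^ m * b ^ n) := by
  induction n with
  | zero => simp
  | succ n ih =>
    rw [pow_succ', mul_assoc, ih, ← mul_assoc b, ← ((Commute.neg_one_left b).pow_left _).eq,
      mul_assoc, ← mul_assoc b, mul_pow_of_mul_eq_neg h, mul_add, pow_add, mul_one]
    simp only [mul_assoc]

variable {X Z : R}

lemma pauli_key_update (hX : X * X = 1) (hZ : Z * Z = 1) (hZX : Z * X = -(X * Z))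
    (x z a b : Fin 2) :
    Z ^ ((z + b : Fin 2) : ℕ) * X ^ ((x + a : Fin 2) : ℕ) * (X ^ (a : ℕ) * Z ^ (b : ℕ))
        * X ^ (x : ℕ) * Z ^ (z : ℕ) = (-1) ^ ((x : ℕ) * (b : ℕ)) := by
  have hXa := pow_mul_pow_self_of_mul_self_eq_one hX (a : ℕ)
  have hXx := pow_mul_pow_self_of_mul_self_eq_one hX (x : ℕ)
  have hZb := pow_mul_pow_self_of_mul_self_eq_one hZ (b : ℕ)
  have hZz := pow_mul_pow_self_of_mul_self_eq_one hZ (z : ℕ)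
  calc _ = Z ^ (z : ℕ) * (Z ^ (b : ℕ) * X ^ (x : ℕ) * (X ^ (a : ℕ) * X ^ (a : ℕ))
          * Z ^ (b : ℕ) * X ^ (x : ℕ)) * Z ^ (z : ℕ) := by
        rw [pow_val_add_of_mul_self_eq_one hZ, pow_val_add_of_mul_self_eq_one hX]
        simp only [mul_assoc]
    _ = Z ^ (z : ℕ) * ((-1) ^ ((x : ℕ) * (b : ℕ)) * (X ^ (x : ℕ) * (Z ^ (b : ℕ) * Z ^ (b : ℕ))
          * X ^ (x : ℕ))) * Z ^ (z : ℕ) := by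
        rw [hXa, mul_one, pow_mul_pow_of_mul_eq_neg hZX]
        simp only [mul_assoc]
    _ = (-1) ^ ((x : ℕ) * (b : ℕ)) := by
        rw [hZb, mul_one, hXx, mul_one, ((Commute.neg_one_right _).pow_right _).eq, mul_assoc, hZz, mul_one]

end Anticommute

lemma norm_omega : ‖ω‖ = 1 := by
  rw [Complex.norm_exp]
  norm_num [Complex.div_re, Complex.mul_re]

lemma omega_sq : ω ^ 2 = Complex.I := by
  rw [← Complex.exp_nat_mul,
    show ((2 : ℕ) : ℂ) * (Complex.I * Real.pi / 4) = Real.pi / 2 * Complex.I by push_cast; ring]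
  simp [Complex.exp_mul_I]

lemma I_mul_conj_omega : Complex.I * starRingEnd ℂ ω = ω := by
  calc Complex.I * starRingEnd ℂ ω = ω * (ω * starRingEnd ℂ ω) := by
        rw [← mul_assoc, ← sq, omega_sq]
    _ = ω := by rw [Complex.mul_conj', norm_omega]; simp

lemma Tg_conjTranspose : Tgᴴ = !![1, 0; 0, starRingEnd ℂ ω] := by
  ext i j
  fin_cases i <;> fin_cases j <;> simp [Tg, Matrix.conjTranspose_apply]

lemma Xg_mul_self : Xg * Xg = 1 := by
  simp [Xg, Matrix.one_fin_two]

lemma Zg_mul_self : Zg * Zg = 1 := by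
  simp [Zg, Matrix.one_fin_two]

lemma Zg_mul_Xg : Zg * Xg = -(Xg * Zg) := by
  simp [Xg, Zg]

lemma Pg_mul_Tg_conjTranspose : Pg * Tgᴴ = Tg := by
  rw [Tg_conjTranspose]
  simp [Pg, I_mul_conj_omega, Tg]

lemma Tg_mul_Xg : Tg * Xg = ω • (Xg * Tgᴴ) := by
  rw [Tg_conjTranspose]
  simp [Tg, Xg, Complex.mul_conj', norm_omega]

lemma Tg_conjTranspose_commute_Zg : Commute Tgᴴ Zg := by
  simp [Commute, SemiconjBy, Tg_conjTranspose, Zg]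

lemma Pg_pow_mul_Tg_conjTranspose_mul_Xg_pow (x : Fin 2) :
    Pg ^ (x : ℕ) * Tgᴴ * Xg ^ (x : ℕ) = ω ^ (x : ℕ) • (Xg ^ (x : ℕ) * Tgᴴ) := by
  fin_cases x
  · simp
  · simp [Pg_mul_Tg_conjTranspose, Tg_mul_Xg]

/-- Correctness of decryption after the homomorphic evaluation of the T†-gate
with updated key `x' = x⊕a`, `z' = z⊕b`: for all bits `x, z, a, b`,
`Z^{z⊕b} X^{x⊕a} · X^a Z^b · P^x · T† · X^x Z^z = c · T†` for some phase `c`,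
where `T†` is the conjugate transpose of `T` (`+` in `Fin 2` is XOR). -/
theorem Tdag_homomorphic_decrypt (x z a b : Fin 2) :
    ∃ c : ℂ, ‖c‖ = 1 ∧
      Zg ^ ((z + b : Fin 2) : ℕ) * Xg ^ ((x + a : Fin 2) : ℕ)
          * (Xg ^ (a : ℕ) * Zg ^ (b : ℕ)) * Pg ^ (x : ℕ) * Tgᴴ
          * (Xg ^ (x : ℕ) * Zg ^ (z : ℕ))
        = c • Tgᴴ := by
  refine ⟨ω ^ (x : ℕ) * (-1) ^ ((x : ℕ) * (b : ℕ)), by simp [norm_omega], ?_⟩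
  calc _ = Zg ^ ((z + b : Fin 2) : ℕ) * Xg ^ ((x + a : Fin 2) : ℕ) * (Xg ^ (a : ℕ) * Zg ^ (b : ℕ))
          * (Pg ^ (x : ℕ) * Tgᴴ * Xg ^ (x : ℕ)) * Zg ^ (z : ℕ) := by simp only [mul_assoc]
    _ = ω ^ (x : ℕ) • (Zg ^ ((z + b : Fin 2) : ℕ) * Xg ^ ((x + a : Fin 2) : ℕ)
          * (Xg ^ (a : ℕ) * Zg ^ (b : ℕ)) * Xg ^ (x : ℕ) * Zg ^ (z : ℕ) * Tgᴴ) := by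
      rw [Pg_pow_mul_Tg_conjTranspose_mul_Xg_pow]
      simp only [mul_smul_comm, smul_mul_assoc, mul_assoc,
        (Tg_conjTranspose_commute_Zg.pow_right _).eq]
    _ = _ := by
      rw [pauli_key_update Xg_mul_self Zg_mul_self Zg_mul_Xg, mul_smul,
        ← smul_one_mul ((-1 : ℂ) ^ _), ← Algebra.algebraMap_eq_smul_one]
      simp
end
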